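/- For 0 < ε < 1 and every real y, the diagonal of the Hermite-function kernel satisfies ∑_{n=0}^∞ ε^n h_n(y)^2 = (1/√((1−ε²)π)) · exp( ((ε−1)/(ε+1)) y² ); in particular the series converges. -/

import Mathlib

open Nat Finset Real MeasureTheory

/-- The physicists' Hermite polynomial, via its explicit formula. -/
noncomputable def hermiteR (n : ℕ) (x : ℝ) : ℝ :=
  (n ! : ℝ) * ∑ m ∈ Finset.range (n / 2 + 1),
    (-1) ^ m * (2 * x) ^ (n - 2 * m) / ((m ! : ℝ) * ((n - 2 * m)! : ℝ))

/-- The normalized Hermite function `h_n(x) = (n! 2^n √π)^{-1/2} H_n(x) e^{-x²/2}`. -/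
noncomputable def hermiteFunR (n : ℕ) (x : ℝ) : ℝ :=
  ((n ! : ℝ) * 2 ^ n * Real.sqrt π) ^ (-(1 : ℝ) / 2) * hermiteR n x *
    Real.exp (-x ^ 2 / 2)

/-!
Expanding `(x + it)ⁿ` binomially and using the Gaussian moments `∫ t^{2m} e^{-t²} dt =
(2m)! √π / (4^m m!)` (odd moments vanish) reproduces the explicit formula, so that
`√π H_n(x) = 2ⁿ ∫ (x + it)ⁿ e^{-t²} dt`. Hence `H_n(x)²` is a double integral over `(t, u)`, and
summing the exponential series under the integral gives
`π ∑ (s/2)ⁿ H_n(x)² / n! = ∫∫ exp (2s (x + it)(x + iu) - t² - u²) dt du`,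
a Gaussian integral equal to `π (1 - s²)^{-1/2} exp (2 s x² / (1 + s))`. For `|s| < 1` dominated
convergence applies because `2 ‖x + it‖ ‖x + iu‖ ≤ 2x² + t² + u²`.
-/

theorem Nat.factorial_two_mul_eq_mul_doubleFactorial (m : ℕ) :
    (2 * m)! = 2 ^ m * m ! * (2 * m - 1)‼ := by
  cases m with
  | zero => rfl
  | succ m =>
    rw [show 2 * (m + 1) - 1 = 2 * m + 1 by omega, show 2 * (m + 1) = 2 * m + 1 + 1 by ring,
      Nat.factorial_eq_mul_doubleFactorial, show 2 * m + 1 + 1 = 2 * (m + 1) by ring,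
      Nat.doubleFactorial_two_mul]

theorem Finset.sum_range_succ_eq_sum_two_mul_of_odd {M : Type*} [AddCommMonoid M] (f : ℕ → M)
    (n : ℕ) (hf : ∀ k, Odd k → f k = 0) :
    ∑ k ∈ range (n + 1), f k = ∑ m ∈ range (n / 2 + 1), f (2 * m) := by
  rw [← sum_image (g := (2 * ·)) fun a _ b _ h => by simpa using h]
  refine (sum_subset (fun k hk => ?_) fun k hk hk' => hf k ?_).symm
  · simp only [mem_image, mem_range] at hk ⊢
    omega
  · simp only [mem_image, mem_range, not_exists, not_and] at hk hk'
    rcases Nat.even_or_odd k with ⟨m, rfl⟩ | hodd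
    · exact absurd (two_mul m) (hk' m (by omega))
    · exact hodd

namespace Complex

theorem ofReal_cpow_one_half {r : ℝ} (hr : 0 ≤ r) : (r : ℂ) ^ (1 / 2 : ℂ) = √r := by
  rw [Real.sqrt_eq_rpow, ofReal_cpow hr]
  norm_num

theorem hasSum_pow_div_factorial_mul (z c : ℂ) :
    HasSum (fun n => z ^ n / n ! * c) (cexp z * c) := by
  rw [exp_eq_exp_ℂ]
  exact (NormedSpace.expSeries_div_hasSum_exp z).mul_right c

theorem hasSum_norm_pow_div_factorial_mul (z c : ℂ) :
    HasSum (fun n => ‖z ^ n / n ! * c‖) (rexp ‖z‖ * ‖c‖) := by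
  simp only [norm_mul, norm_div, norm_pow, norm_natCast]
  rw [Real.exp_eq_exp_ℝ]
  exact (NormedSpace.expSeries_div_hasSum_exp ‖z‖).mul_right ‖c‖

end Complex

theorem integrable_pow_mul_exp_neg_sq (k : ℕ) : Integrable fun t : ℝ => t ^ k * rexp (-t ^ 2) := by
  simpa using integrable_rpow_mul_exp_neg_mul_sq one_pos (s := k)
    (by linarith [k.cast_nonneg (α := ℝ)])

theorem integral_pow_mul_exp_neg_sq_of_odd {k : ℕ} (hk : Odd k) :
    ∫ t : ℝ, t ^ k * rexp (-t ^ 2) = 0 := by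
  have h := integral_neg_eq_self (fun t : ℝ => t ^ k * rexp (-t ^ 2)) volume
  simp only [hk.neg_pow, even_two.neg_pow, neg_mul, integral_neg] at h
  linarith

theorem integral_pow_two_mul_mul_exp_neg_sq (m : ℕ) :
    ∫ t : ℝ, t ^ (2 * m) * rexp (-t ^ 2) = (2 * m)! / (4 ^ m * m !) * √π := by
  have habs := integral_comp_abs (f := fun t : ℝ => t ^ (2 * m) * rexp (-t ^ 2))
  have hgamma := integral_rpow_mul_exp_neg_rpow two_pos (q := ((2 * m : ℕ) : ℝ))
    (by linarith [(2 * m).cast_nonneg (α := ℝ)])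
  simp only [Real.rpow_natCast, Real.rpow_two, (even_two_mul m).pow_abs, sq_abs] at habs hgamma
  rw [habs, hgamma, show ((2 * m : ℕ) + 1 : ℝ) / 2 = m + 1 / 2 by push_cast; ring,
    Real.Gamma_nat_add_half, Nat.factorial_two_mul_eq_mul_doubleFactorial,
    show (4 : ℝ) ^ m = 2 ^ m * 2 ^ m by rw [← mul_pow]; norm_num]
  push_cast
  field_simp

section IntegralRepresentation

open Complex

noncomputable def hermiteIntegral (x : ℝ) (n : ℕ) : ℂ :=
  ∫ t : ℝ, ((x : ℂ) + t * I) ^ n * cexp (-(t : ℂ) ^ 2)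

theorem hermiteIntegral_eq_sum_moments (x : ℝ) (n : ℕ) :
    hermiteIntegral x n = ∑ k ∈ range (n + 1),
      (x : ℂ) ^ (n - k) * I ^ k * n.choose k * ↑(∫ t : ℝ, t ^ k * rexp (-t ^ 2)) := by
  have hexpand : ∀ t : ℝ, ((x : ℂ) + t * I) ^ n * cexp (-(t : ℂ) ^ 2) = ∑ k ∈ range (n + 1),
      (x : ℂ) ^ (n - k) * I ^ k * n.choose k * ↑(t ^ k * rexp (-t ^ 2)) := by
    intro t
    rw [add_comm, add_pow, sum_mul]
    refine sum_congr rfl fun k _ => ?_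
    push_cast
    ring
  simp_rw [hermiteIntegral, hexpand]
  rw [integral_finsetSum _ fun k _ => (integrable_pow_mul_exp_neg_sq k).ofReal.const_mul _]
  refine sum_congr rfl fun k _ => ?_
  rw [integral_const_mul, integral_complex_ofReal]

theorem hermiteR_mul_sqrt_pi (n : ℕ) (x : ℝ) :
    (hermiteR n x : ℂ) * √π = 2 ^ n * hermiteIntegral x n := by
  have hodd (k : ℕ) (hk : Odd k) :
      (x : ℂ) ^ (n - k) * I ^ k * n.choose k * ↑(∫ t : ℝ, t ^ k * rexp (-t ^ 2)) = 0 := by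
    rw [integral_pow_mul_exp_neg_sq_of_odd hk, ofReal_zero, mul_zero]
  rw [hermiteIntegral_eq_sum_moments, sum_range_succ_eq_sum_two_mul_of_odd _ _ hodd, hermiteR,
    mul_sum, ofReal_sum, mul_sum, sum_mul]
  refine sum_congr rfl fun m hm => ?_
  have hmn : 2 * m ≤ n := by simp only [mem_range] at hm; omega
  have hpow : (2 : ℂ) ^ n = 2 ^ (n - 2 * m) * 4 ^ m := by
    rw [show (4 : ℂ) = 2 ^ 2 by norm_num, ← pow_mul, ← pow_add, Nat.sub_add_cancel hmn]
  rw [integral_pow_two_mul_mul_exp_neg_sq, pow_mul, I_sq, Nat.cast_choose ℂ hmn, hpow]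
  have := (2 * m).factorial_ne_zero
  push_cast
  field_simp
  ring

theorem hermiteIntegral_sq (n : ℕ) (x : ℝ) :
    hermiteIntegral x n ^ 2 = ↑(π * hermiteR n x ^ 2 / 4 ^ n : ℝ) := by
  have h4 : (4 : ℂ) ^ n = (2 ^ n) ^ 2 := by rw [← pow_mul, mul_comm, pow_mul]; norm_num
  push_cast
  rw [h4, eq_div_iff (by simp), ← mul_pow, mul_comm, ← hermiteR_mul_sqrt_pi, mul_pow,
    ← ofReal_pow √π, Real.sq_sqrt pi_pos.le, mul_comm]

end IntegralRepresentation

section Mehler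

open Complex

variable {s : ℝ} (x : ℝ)

noncomputable def mehlerExponent (s x : ℝ) (p : ℝ × ℝ) : ℂ :=
  2 * s * (x + p.1 * I) * (x + p.2 * I)

noncomputable def gaussianWeight (p : ℝ × ℝ) : ℂ :=
  cexp (-(p.1 : ℂ) ^ 2) * cexp (-(p.2 : ℂ) ^ 2)

theorem norm_gaussianWeight (p : ℝ × ℝ) :
    ‖gaussianWeight p‖ = rexp (-p.1 ^ 2) * rexp (-p.2 ^ 2) := by
  rw [gaussianWeight, norm_mul, norm_exp, norm_exp]
  norm_cast

theorem integrable_exp_norm_mehlerExponent_mul (hs : |s| < 1) :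
    Integrable fun p => rexp ‖mehlerExponent s x p‖ * ‖gaussianWeight p‖ := by
  have hgauss : Integrable fun t : ℝ => rexp (-(1 - |s|) * t ^ 2) :=
    integrable_exp_neg_mul_sq (by linarith)
  refine ((hgauss.mul_prod hgauss).const_mul (rexp (2 * |s| * x ^ 2))).mono'
    (by unfold mehlerExponent gaussianWeight; fun_prop) (ae_of_all _ fun p => ?_)
  have hsq (t : ℝ) : ‖(x : ℂ) + t * I‖ ^ 2 = x ^ 2 + t ^ 2 := by
    rw [Complex.sq_norm, normSq_add_mul_I]
  have hamgm := two_mul_le_add_sq ‖(x : ℂ) + p.1 * I‖ ‖(x : ℂ) + p.2 * I‖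
  rw [hsq, hsq] at hamgm
  simp only [mehlerExponent, norm_gaussianWeight, norm_mul, Complex.norm_ofNat, norm_real,
    Real.norm_eq_abs, Real.abs_exp]
  rw [← Real.exp_add, ← Real.exp_add, ← Real.exp_add, ← Real.exp_add, Real.exp_le_exp]
  nlinarith [abs_nonneg s]

theorem integrable_cexp_mehlerExponent_mul (hs : |s| < 1) :
    Integrable fun p => cexp (mehlerExponent s x p) * gaussianWeight p :=
  (integrable_exp_norm_mehlerExponent_mul x hs).mono'
    (by unfold mehlerExponent gaussianWeight; fun_prop) (ae_of_all _ fun p => by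
      rw [norm_mul]
      gcongr
      exact norm_exp_le_exp_norm _)

theorem hasSum_hermiteIntegral_sq (hs : |s| < 1) :
    HasSum (fun n => ((2 * s) ^ n / n ! : ℂ) * hermiteIntegral x n ^ 2)
      (∫ p, cexp (mehlerExponent s x p) * gaussianWeight p) := by
  have hterm (n : ℕ) : ((2 * s) ^ n / n ! : ℂ) * hermiteIntegral x n ^ 2
      = ∫ p, mehlerExponent s x p ^ n / n ! * gaussianWeight p := by
    rw [Measure.volume_eq_prod, sq, hermiteIntegral, ← integral_prod_mul, ← integral_const_mul]
    congr 1
    funext p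
    simp only [mehlerExponent, gaussianWeight, mul_pow]
    ring
  simp_rw [hterm]
  exact hasSum_integral_of_dominated_convergence
    (fun n p => ‖mehlerExponent s x p ^ n / n ! * gaussianWeight p‖)
    (fun n => Continuous.aestronglyMeasurable (by unfold mehlerExponent gaussianWeight; fun_prop))
    (fun n => ae_of_all _ fun p => le_rfl)
    (ae_of_all _ fun p => (hasSum_norm_pow_div_factorial_mul _ _).summable)
    ((integrable_exp_norm_mehlerExponent_mul x hs).congr
      (ae_of_all _ fun p => (hasSum_norm_pow_div_factorial_mul _ _).tsum_eq.symm))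
    (ae_of_all _ fun p => hasSum_pow_div_factorial_mul _ _)

theorem integral_cexp_mehlerExponent_mk_mul (s x t : ℝ) :
    ∫ u : ℝ, cexp (mehlerExponent s x (t, u)) * gaussianWeight (t, u) = √π *
      cexp ((s ^ 2 - 1 : ℝ) * t ^ 2 + (2 * s * x * (1 - s) * I) * t + (2 * s - s ^ 2) * x ^ 2) := by
  calc ∫ u : ℝ, cexp (mehlerExponent s x (t, u)) * gaussianWeight (t, u)
      = ∫ u : ℝ, cexp (-1 * u ^ 2 + (2 * s * (x + t * I) * I) * u
          + (2 * s * x * (x + t * I) - t ^ 2)) := by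
        congr 1
        funext u
        rw [mehlerExponent, gaussianWeight, ← Complex.exp_add, ← Complex.exp_add]
        ring_nf
    _ = _ := by
        rw [integral_cexp_quadratic (by norm_num), neg_neg, div_one,
          ofReal_cpow_one_half pi_pos.le]
        congr 2
        push_cast
        linear_combination ((s : ℂ) ^ 2 * (x ^ 2 + 2 * x * t * I + t ^ 2 * (I ^ 2 - 1))) * I_sq

theorem integral_cexp_mehlerExponent_mul (hs : |s| < 1) :
    ∫ p, cexp (mehlerExponent s x p) * gaussianWeight p
      = ↑(π / √(1 - s ^ 2) * rexp (2 * s * x ^ 2 / (1 + s))) := by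
  have hs2 : 0 < 1 - s ^ 2 := by nlinarith [abs_nonneg s, sq_abs s]
  have h1s : (1 + s : ℂ) ≠ 0 := by exact_mod_cast (by linarith [neg_abs_le s] : 1 + s ≠ 0)
  have hs21 : (s : ℂ) ^ 2 - 1 ≠ 0 := by exact_mod_cast (by linarith : s ^ 2 - 1 ≠ 0)
  have hbase : (π : ℂ) / -((s ^ 2 - 1 : ℝ) : ℂ) = ((π / (1 - s ^ 2) : ℝ) : ℂ) := by
    push_cast
    ring
  have hexponent : (2 * s - s ^ 2) * x ^ 2
      - (2 * s * x * (1 - s) * I) ^ 2 / (4 * ((s ^ 2 - 1 : ℝ) : ℂ))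
      = ((2 * s * x ^ 2 / (1 + s) : ℝ) : ℂ) := by
    rw [mul_pow, I_sq]
    push_cast
    field_simp
    ring
  rw [Measure.volume_eq_prod, integral_prod _ (by
      rw [← Measure.volume_eq_prod]; exact integrable_cexp_mehlerExponent_mul x hs),
    funext (integral_cexp_mehlerExponent_mk_mul s x), integral_const_mul,
    integral_cexp_quadratic (by rw [ofReal_re]; linarith), hbase, hexponent,
    ofReal_cpow_one_half (by positivity), Real.sqrt_div' _ hs2.le, ← ofReal_exp]
  push_cast
  field_simp
  rw [← ofReal_pow, Real.sq_sqrt pi_pos.le]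

theorem hasSum_hermiteR_sq (hs : |s| < 1) :
    HasSum (fun n => (s / 2) ^ n / n ! * hermiteR n x ^ 2)
      (rexp (2 * s * x ^ 2 / (1 + s)) / √(1 - s ^ 2)) := by
  have hterm (n : ℕ) : ((2 * s) ^ n / n ! : ℂ) * hermiteIntegral x n ^ 2
      = ↑(π * ((s / 2) ^ n / n ! * hermiteR n x ^ 2) : ℝ) := by
    rw [hermiteIntegral_sq, show (4 : ℝ) ^ n = 2 ^ n * 2 ^ n by rw [← mul_pow]; norm_num]
    push_cast
    rw [div_pow, mul_pow]
    field_simp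
  have h := hasSum_hermiteIntegral_sq x hs
  simp_rw [hterm, integral_cexp_mehlerExponent_mul x hs, hasSum_ofReal] at h
  rwa [← hasSum_mul_left_iff pi_ne_zero, mul_div_left_comm, mul_comm]

end Mehler

theorem hermiteFunR_sq (n : ℕ) (x : ℝ) :
    hermiteFunR n x ^ 2 = hermiteR n x ^ 2 * rexp (-x ^ 2) / (n ! * 2 ^ n * √π) := by
  have hpos : (0 : ℝ) < n ! * 2 ^ n * √π := by positivity
  rw [hermiteFunR, mul_pow, mul_pow, ← Real.rpow_natCast, ← Real.rpow_mul hpos.le,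
    ← Real.exp_nat_mul]
  norm_num [Real.rpow_neg_one]
  field_simp

theorem stmt_9 (ε : ℝ) (hε : 0 < ε) (hε1 : ε < 1) (y : ℝ) :
    HasSum (fun n : ℕ => ε ^ n * hermiteFunR n y ^ 2)
      (1 / Real.sqrt ((1 - ε ^ 2) * π) * Real.exp ((ε - 1) / (ε + 1) * y ^ 2)) := by
  have hterm : (fun n : ℕ => ε ^ n * hermiteFunR n y ^ 2)
      = fun n => (ε / 2) ^ n / n ! * hermiteR n y ^ 2 * (rexp (-y ^ 2) / √π) := by
    funext n
    rw [hermiteFunR_sq, div_pow]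
    field_simp
  have hexponent : (ε - 1) / (ε + 1) * y ^ 2 = 2 * ε * y ^ 2 / (1 + ε) + -y ^ 2 := by
    field_simp
    ring
  have hsum : 1 / √((1 - ε ^ 2) * π) * rexp ((ε - 1) / (ε + 1) * y ^ 2)
      = rexp (2 * ε * y ^ 2 / (1 + ε)) / √(1 - ε ^ 2) * (rexp (-y ^ 2) / √π) := by
    rw [Real.sqrt_mul (by nlinarith), hexponent, Real.exp_add]
    field_simp
  rw [hterm, hsum]
  exact (hasSum_hermiteR_sq y (abs_lt.mpr ⟨by linarith, hε1⟩)).mul_right _
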